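/- arXiv:2502.03095 — 4 statements merged into one kernel-verified Lean document; each statement's English description precedes it below -/
import Mathlib

section
/- Let ω : ℝ × ℝ → (0,1) satisfy ω(a,b) = 1 − ω(b,a) for all a, b. Define p*(x,y₁,y₂) = ω(r(x,y₁), r(x,y₂)), the posterior implicit reward of a positive policy π by r̄_π(x,y) = (1/τ)·log(Z'(x)·π(y|x)/π_ref(y|x)), the model comparison probability p̄_π(x,y₁,y₂) = ω(r̄_π(x,y₁), r̄_π(x,y₂)), and the PRA-P loss L_PRA-P(π) = Σ_{x∈X} 𝒟(x) · Σ_{y₁,y₂∈Y} π(y₁|x)·π(y₂|x) · [p*(x,y₁,y₂)·log(p*(x,y₁,y₂)/p̄_π(x,y₁,y₂)) + (1 − p*(x,y₁,y₂))·log((1 − p*(x,y₁,y₂))/(1 − p̄_π(x,y₁,y₂)))]. Then L_PRA-P(π) ≥ 0 for every positive policy π and L_PRA-P(π̄^τ) = 0; hence π̄^τ is a global minimizer of L_PRA-P. -/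
open Finset

/-! Each summand of the loss is a policy weight times the binary Kullback–Leibler divergence
between `p*` and `p̄_π`, hence nonnegative. At the posterior Boltzmann policy the implicit
reward `r̄` recovers `r` exactly, because `Z'` cancels against the normalisation of `π̄^τ`; so
`p̄ = p*` and every divergence vanishes. -/

open Real in
noncomputable def binaryKL (a b : ℝ) : ℝ :=
  a * log (a / b) + (1 - a) * log ((1 - a) / (1 - b))

open Real in
lemma sub_le_mul_log_div {a b : ℝ} (ha : 0 ≤ a) (hb : 0 < b) : a - b ≤ a * log (a / b) := by
  rcases ha.eq_or_lt with rfl | ha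
  · simp [hb.le]
  · have h := mul_le_mul_of_nonneg_left (one_sub_inv_le_log_of_pos (div_pos ha hb)) ha.le
    rwa [inv_div, mul_sub, mul_one, mul_div_cancel₀ _ ha.ne'] at h

lemma binaryKL_nonneg {a b : ℝ} (ha₀ : 0 ≤ a) (ha₁ : a ≤ 1) (hb₀ : 0 < b) (hb₁ : b < 1) :
    0 ≤ binaryKL a b := by
  have h₁ := sub_le_mul_log_div ha₀ hb₀
  have h₂ := sub_le_mul_log_div (sub_nonneg.2 ha₁) (sub_pos.2 hb₁)
  unfold binaryKL
  linarith

lemma binaryKL_self {a : ℝ} : binaryKL a a = 0 := by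
  by_cases ha : a = 0
  · simp [binaryKL, ha]
  by_cases ha' : 1 - a = 0
  · simp [binaryKL, ha']
  simp [binaryKL, div_self ha, div_self ha']

open Real in
lemma one_div_mul_log_mul_boltzmann_div {τ Z q s : ℝ} (hτ : τ ≠ 0) (hZ : Z ≠ 0) (hq : q ≠ 0) :
    1 / τ * log (Z * (q * exp (τ * s) / Z) / q) = s := by
  rw [mul_div_cancel₀ _ hZ, mul_div_cancel_left₀ _ hq, log_exp]
  field_simp

theorem prap_target_distribution_general
    {X Y : Type*} [Fintype X] [Fintype Y]
    (r : X → Y → ℝ) (τ : ℝ) (hτ : 0 < τ)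
    (D : X → ℝ) (hD0 : ∀ x, 0 ≤ D x)
    (πref : X → Y → ℝ)
    (hπref0 : ∀ x y, 0 < πref x y)
    (ω : ℝ → ℝ → ℝ)
    (hω0 : ∀ a b, 0 < ω a b) (hω1 : ∀ a b, ω a b < 1)
    (Z' : X → ℝ) (hZ' : ∀ x, Z' x = ∑ y' : Y, πref x y' * Real.exp (τ * r x y'))
    (πbar : X → Y → ℝ)
    (hπbar : ∀ x y, πbar x y = πref x y * Real.exp (τ * r x y) / Z' x)
    (pstar : X → Y → Y → ℝ)
    (hpstar : ∀ x y₁ y₂, pstar x y₁ y₂ = ω (r x y₁) (r x y₂))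
    (rbar : (X → Y → ℝ) → X → Y → ℝ)
    (hrbar : ∀ p x y, rbar p x y = (1 / τ) * Real.log (Z' x * p x y / πref x y))
    (pbar : (X → Y → ℝ) → X → Y → Y → ℝ)
    (hpbar : ∀ p x y₁ y₂, pbar p x y₁ y₂ = ω (rbar p x y₁) (rbar p x y₂))
    (LPRAP : (X → Y → ℝ) → ℝ)
    (hLPRAP : ∀ p : X → Y → ℝ,
      LPRAP p = ∑ x : X, D x * ∑ y₁ : Y, ∑ y₂ : Y,
        p x y₁ * p x y₂ *
          (pstar x y₁ y₂ * Real.log (pstar x y₁ y₂ / pbar p x y₁ y₂) +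
           (1 - pstar x y₁ y₂) *
             Real.log ((1 - pstar x y₁ y₂) / (1 - pbar p x y₁ y₂)))) :
    (∀ π : X → Y → ℝ, (∀ x y, 0 < π x y) → (∀ x, ∑ y : Y, π x y = 1) →
      0 ≤ LPRAP π) ∧
    LPRAP πbar = 0 := by
  have hL : ∀ p, LPRAP p = ∑ x, D x * ∑ y₁, ∑ y₂,
      p x y₁ * p x y₂ * binaryKL (pstar x y₁ y₂) (pbar p x y₁ y₂) := hLPRAP
  have hZ'_pos : ∀ x (y : Y), 0 < Z' x := fun x y => (hZ' x).symm ▸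
    sum_pos (fun y' _ => mul_pos (hπref0 x y') (Real.exp_pos _)) ⟨y, mem_univ y⟩
  have hrbar_πbar : ∀ x y, rbar πbar x y = r x y := fun x y => by
    rw [hrbar, hπbar]
    exact one_div_mul_log_mul_boltzmann_div hτ.ne' (hZ'_pos x y).ne' (hπref0 x y).ne'
  refine ⟨fun π hπ _ => ?_, ?_⟩
  · rw [hL]
    refine sum_nonneg fun x _ => mul_nonneg (hD0 x) <| sum_nonneg fun y₁ _ =>
      sum_nonneg fun y₂ _ => mul_nonneg (mul_pos (hπ x y₁) (hπ x y₂)).le ?_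
    rw [hpstar, hpbar]
    exact binaryKL_nonneg (hω0 _ _).le (hω1 _ _).le (hω0 _ _) (hω1 _ _)
  · simp [hL, hpbar, hpstar, hrbar_πbar, binaryKL_self]

/-- The posterior Preference-Reward-Approximation (PRA-P) loss, built
from any comparison model ω with values in (0,1) satisfying ω(a,b) = 1 − ω(b,a), is
nonnegative for every positive policy and vanishes at the posterior Boltzmann policy
π̄^τ; hence π̄^τ is a global minimizer of L_PRA-P. -/
theorem prap_target_distribution
    {X Y : Type*} [Fintype X] [Fintype Y] [Nonempty X] [Nonempty Y]
    (r : X → Y → ℝ) (τ : ℝ) (hτ : 0 < τ)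
    (D : X → ℝ) (hD0 : ∀ x, 0 ≤ D x) (hD1 : ∑ x : X, D x = 1)
    (πref : X → Y → ℝ)
    (hπref0 : ∀ x y, 0 < πref x y) (hπref1 : ∀ x, ∑ y : Y, πref x y = 1)
    (ω : ℝ → ℝ → ℝ)
    (hω0 : ∀ a b, 0 < ω a b) (hω1 : ∀ a b, ω a b < 1)
    (hωsym : ∀ a b, ω a b = 1 - ω b a)
    (Z' : X → ℝ) (hZ' : ∀ x, Z' x = ∑ y' : Y, πref x y' * Real.exp (τ * r x y'))
    (πbar : X → Y → ℝ)
    (hπbar : ∀ x y, πbar x y = πref x y * Real.exp (τ * r x y) / Z' x)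
    (pstar : X → Y → Y → ℝ)
    (hpstar : ∀ x y₁ y₂, pstar x y₁ y₂ = ω (r x y₁) (r x y₂))
    (rbar : (X → Y → ℝ) → X → Y → ℝ)
    (hrbar : ∀ p x y, rbar p x y = (1 / τ) * Real.log (Z' x * p x y / πref x y))
    (pbar : (X → Y → ℝ) → X → Y → Y → ℝ)
    (hpbar : ∀ p x y₁ y₂, pbar p x y₁ y₂ = ω (rbar p x y₁) (rbar p x y₂))
    (LPRAP : (X → Y → ℝ) → ℝ)
    (hLPRAP : ∀ p : X → Y → ℝ,
      LPRAP p = ∑ x : X, D x * ∑ y₁ : Y, ∑ y₂ : Y,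
        p x y₁ * p x y₂ *
          (pstar x y₁ y₂ * Real.log (pstar x y₁ y₂ / pbar p x y₁ y₂) +
           (1 - pstar x y₁ y₂) *
             Real.log ((1 - pstar x y₁ y₂) / (1 - pbar p x y₁ y₂)))) :
    (∀ π : X → Y → ℝ, (∀ x y, 0 < π x y) → (∀ x, ∑ y : Y, π x y = 1) →
      0 ≤ LPRAP π) ∧
    LPRAP πbar = 0 :=
  prap_target_distribution_general r τ hτ D hD0 πref hπref0 ω hω0 hω1 Z' hZ' πbar hπbar pstar hpstar
    rbar hrbar pbar hpbar LPRAP hLPRAP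
end

section
/- Consider the DPO loss L_DPO(θ) of the softmax-parametrized policy π_θ (under the Bradley–Terry model p*(x,y₁,y₂) = σ(r(x,y₁) − r(x,y₂)), with fixed positive policies π₀ and π_ref), viewed as a function of θ : X × Y → ℝ, and let L* = inf_θ L_DPO(θ). Let (α_t)_{t≥1} be positive step sizes, G ≥ 0, and suppose the iterates satisfy θ_{t+1} = θ_t − α_t·∇L_DPO(θ_t) with ‖∇L_DPO(θ_t)‖ ≤ G for all t. Then for every T ≥ 2: min_{1 ≤ i ≤ T−1} ‖∇L_DPO(θ_i)‖² ≤ (2·G²·Σ_{t=1}^{T−1} α_t²)/(τ²·Σ_{t=1}^{T−1} α_t) + (L_DPO(θ_1) − L*)/(Σ_{t=1}^{T−1} α_t). -/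
/-!
The log-partition function of the softmax cancels in `h̄_θ`, so `L_DPO` is a convex combination
of logistic losses `t ↦ -(p log σ t + (1 - p) log σ (-t))` evaluated at the affine functions
`θ ↦ (θ(x,y₁) - θ(x,y₂))/τ + const`. The derivative `σ t - p` of the logistic loss is
`1/4`-Lipschitz and each linear part has squared norm at most `4/τ²`, which gives the descent
inequality `L(θ + δ) ≤ L(θ) + ⟪∇L(θ), δ⟫ + ‖δ‖²/(2τ²)`. Hence the step `t` lowers `L` by at
least `α_t ‖∇L(θ_t)‖² - α_t² G²/(2τ²)`; summing over `t` and using `L* ≤ L(θ_T)` (as `L ≥ 0`)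
gives the bound.
-/

open Real Finset NNReal InnerProductSpace
open scoped RealInnerProductSpace

theorem le_add_deriv_mul_add_sq_of_le {f f' : ℝ → ℝ} {K : ℝ≥0}
    (hf : ∀ x, HasDerivAt f (f' x) x) (hf' : LipschitzWith K f') {u v : ℝ} (huv : u ≤ v) :
    f v ≤ f u + f' u * (v - u) + K / 2 * (v - u) ^ 2 := by
  set g : ℝ → ℝ := fun x => f u + f' u * (x - u) + K / 2 * (x - u) ^ 2 - f x
  have hg : ∀ x, HasDerivAt g (f' u + K * (x - u) - f' x) x := by
    intro x
    have hx : HasDerivAt (fun x => x - u) 1 x := (hasDerivAt_id' x).sub_const u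
    exact (((hx.const_mul (f' u)).const_add (f u)).add ((hx.pow 2).const_mul (K / 2 : ℝ))
      |>.sub (hf x)).congr_deriv (by push_cast; ring)
  have hmono : MonotoneOn g (Set.Ici u) := by
    refine monotoneOn_of_hasDerivWithinAt_nonneg (convex_Ici u)
      (HasDerivAt.continuousOn fun x _ => hg x) (fun x _ => (hg x).hasDerivWithinAt) ?_
    intro x hx
    rw [interior_Ici] at hx
    have := hf'.dist_le_mul x u
    rw [Real.dist_eq, Real.dist_eq, abs_of_pos (sub_pos.2 hx : (0:ℝ) < x - u)] at this
    linarith [le_abs_self (f' x - f' u)]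
  have := hmono Set.self_mem_Ici huv huv
  simp only [g, sub_self] at this
  linarith

theorem le_add_deriv_mul_add_sq_of_lipschitzWith {f f' : ℝ → ℝ} {K : ℝ≥0}
    (hf : ∀ x, HasDerivAt f (f' x) x) (hf' : LipschitzWith K f') (u v : ℝ) :
    f v ≤ f u + f' u * (v - u) + K / 2 * (v - u) ^ 2 := by
  rcases le_total u v with huv | hvu
  · exact le_add_deriv_mul_add_sq_of_le hf hf' huv
  · have hrefl : ∀ x, HasDerivAt (fun x => f (-x)) (-f' (-x)) x := fun x => by
      simpa [Function.comp_def] using (hf (-x)).comp x (hasDerivAt_neg x)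
    have hrefl' : LipschitzWith K (fun x => -f' (-x)) := by
      have := (hf'.comp LipschitzWith.id.neg).neg
      rw [mul_one] at this
      exact this
    have := le_add_deriv_mul_add_sq_of_le hrefl hrefl' (neg_le_neg hvu)
    simp only [neg_neg] at this
    linarith

section QuadraticUpperBound

variable {E ι : Type*} [NormedAddCommGroup E] [InnerProductSpace ℝ E] [Fintype ι]

theorem hasFDerivAt_sum_mul_comp_add {φ φ' : ι → ℝ → ℝ} (hφ : ∀ i t, HasDerivAt (φ i) (φ' i t) t)
    (w b : ι → ℝ) (ℓ : ι → E →L[ℝ] ℝ) (θ : E) :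
    HasFDerivAt (fun θ => ∑ i, w i * φ i (ℓ i θ + b i))
      (∑ i, (w i * φ' i (ℓ i θ + b i)) • ℓ i) θ :=
  HasFDerivAt.fun_sum fun i _ => by
    have h := ((hφ i _).comp_hasFDerivAt θ ((ℓ i).hasFDerivAt.add_const (b i))).const_mul (w i)
    rw [smul_smul] at h
    exact h

theorem apply_add_le_of_eq_sum_comp_affine [CompleteSpace E] {F : E → ℝ} {φ φ' : ι → ℝ → ℝ}
    {w b : ι → ℝ} {ℓ : ι → E →L[ℝ] ℝ} {c K : ℝ} (hF : ∀ θ, F θ = ∑ i, w i * φ i (ℓ i θ + b i))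
    (hφ : ∀ i t, HasDerivAt (φ i) (φ' i t) t)
    (hφc : ∀ i u v, φ i v ≤ φ i u + φ' i u * (v - u) + c * (v - u) ^ 2) (hc : 0 ≤ c)
    (hw : ∀ i, 0 ≤ w i) (hℓ : ∀ i δ, ℓ i δ ^ 2 ≤ K * ‖δ‖ ^ 2) (θ δ : E) :
    F (θ + δ) ≤ F θ + ⟪gradient F θ, δ⟫_ℝ + c * K * (∑ i, w i) * ‖δ‖ ^ 2 := by
  have hFfun : F = fun θ => ∑ i, w i * φ i (ℓ i θ + b i) := funext hF
  have hgrad : ⟪gradient F θ, δ⟫_ℝ = ∑ i, w i * φ' i (ℓ i θ + b i) * ℓ i δ := by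
    rw [hFfun, (hasFDerivAt_sum_mul_comp_add hφ w b ℓ θ).hasGradientAt.gradient, toDual_symm_apply]
    simp
  have hterm : ∀ i, w i * φ i (ℓ i θ + b i + ℓ i δ) ≤ w i * φ i (ℓ i θ + b i)
      + w i * φ' i (ℓ i θ + b i) * ℓ i δ + c * K * w i * ‖δ‖ ^ 2 := by
    intro i
    have h := hφc i (ℓ i θ + b i) (ℓ i θ + b i + ℓ i δ)
    rw [add_sub_cancel_left] at h
    have hq := mul_le_mul_of_nonneg_left (hℓ i δ) hc
    nlinarith [mul_le_mul_of_nonneg_left h (hw i), mul_le_mul_of_nonneg_left hq (hw i)]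
  calc F (θ + δ) = ∑ i, w i * φ i (ℓ i θ + b i + ℓ i δ) := by
        simp only [hF, map_add, add_right_comm]
    _ ≤ ∑ i, (w i * φ i (ℓ i θ + b i) + w i * φ' i (ℓ i θ + b i) * ℓ i δ
          + c * K * w i * ‖δ‖ ^ 2) := sum_le_sum fun i _ => hterm i
    _ = F θ + ⟪gradient F θ, δ⟫_ℝ + c * K * (∑ i, w i) * ‖δ‖ ^ 2 := by
        rw [sum_add_distrib, sum_add_distrib, hF, hgrad, mul_sum, sum_mul]

end QuadraticUpperBound

section GradientDescent

variable {E : Type*} [NormedAddCommGroup E] [InnerProductSpace ℝ E] [CompleteSpace E]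

theorem gradient_descent_step_le {f : E → ℝ} {c : ℝ}
    (hf : ∀ θ δ, f (θ + δ) ≤ f θ + ⟪gradient f θ, δ⟫_ℝ + c * ‖δ‖ ^ 2) (θ : E) (a : ℝ) :
    f (θ - a • gradient f θ) ≤ f θ - a * ‖gradient f θ‖ ^ 2 + c * a ^ 2 * ‖gradient f θ‖ ^ 2 := by
  have h := hf θ (-(a • gradient f θ))
  rw [← sub_eq_add_neg, inner_neg_right, real_inner_smul_right, real_inner_self_eq_norm_sq,
    norm_neg, norm_smul, mul_pow, Real.norm_eq_abs, sq_abs] at h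
  linarith

theorem sum_Icc_le_of_le_sub_add {u a e : ℕ → ℝ} {n : ℕ}
    (h : ∀ t ∈ Icc 1 n, u (t + 1) ≤ u t - a t + e t) :
    ∑ t ∈ Icc 1 n, a t ≤ u 1 - u (n + 1) + ∑ t ∈ Icc 1 n, e t := by
  induction n with
  | zero => simp
  | succ n ih =>
    rw [sum_Icc_succ_top (by omega), sum_Icc_succ_top (by omega)]
    have hn := h (n + 1) (mem_Icc.2 ⟨by omega, le_rfl⟩)
    have := ih fun t ht => h t (Icc_subset_Icc_right n.le_succ ht)
    linarith

theorem inf'_sq_norm_gradient_le_of_gradient_descent {f : E → ℝ} {c fstar G : ℝ}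
    {α : ℕ → ℝ} {Θ : ℕ → E}
    (hf : ∀ θ δ, f (θ + δ) ≤ f θ + ⟪gradient f θ, δ⟫_ℝ + c * ‖δ‖ ^ 2) (hc : 0 ≤ c)
    (hfstar : ∀ θ, fstar ≤ f θ) (hα : ∀ t, 1 ≤ t → 0 < α t)
    (hupdate : ∀ t, 1 ≤ t → Θ (t + 1) = Θ t - α t • gradient f (Θ t))
    (hgrad : ∀ t, 1 ≤ t → ‖gradient f (Θ t)‖ ≤ G) {n : ℕ} (hn : (Icc 1 n).Nonempty) :
    (Icc 1 n).inf' hn (fun i => ‖gradient f (Θ i)‖ ^ 2) ≤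
      c * G ^ 2 * (∑ t ∈ Icc 1 n, α t ^ 2) / ∑ t ∈ Icc 1 n, α t
        + (f (Θ 1) - fstar) / ∑ t ∈ Icc 1 n, α t := by
  set m := (Icc 1 n).inf' hn (fun i => ‖gradient f (Θ i)‖ ^ 2)
  have hstep : ∀ t ∈ Icc 1 n, f (Θ (t + 1)) ≤ f (Θ t) - α t * m + c * G ^ 2 * α t ^ 2 := by
    intro t ht
    have ht1 := (mem_Icc.1 ht).1
    have hdesc := gradient_descent_step_le hf (Θ t) (α t)
    rw [← hupdate t ht1] at hdesc
    have hm := mul_le_mul_of_nonneg_left (inf'_le _ ht : m ≤ _) (hα t ht1).le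
    have hG := mul_le_mul_of_nonneg_left (pow_le_pow_left₀ (norm_nonneg _) (hgrad t ht1) 2)
      (by positivity : 0 ≤ c * α t ^ 2)
    linarith
  have hsum := sum_Icc_le_of_le_sub_add (u := fun t => f (Θ t)) (a := fun t => α t * m)
    (e := fun t => c * G ^ 2 * α t ^ 2) hstep
  rw [← sum_mul, ← mul_sum] at hsum
  have hpos : 0 < ∑ t ∈ Icc 1 n, α t := sum_pos (fun t ht => hα t (mem_Icc.1 ht).1) hn
  rw [← add_div, le_div_iff₀ hpos]
  linarith [hfstar (Θ (n + 1))]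

end GradientDescent

noncomputable def logisticLoss (p t : ℝ) : ℝ :=
  -(p * log (sigmoid t) + (1 - p) * log (sigmoid (-t)))

theorem logisticLoss_nonneg {p : ℝ} (hp₀ : 0 ≤ p) (hp₁ : p ≤ 1) (t : ℝ) : 0 ≤ logisticLoss p t := by
  have h (s : ℝ) : log (sigmoid s) ≤ 0 := log_nonpos (sigmoid_nonneg s) (sigmoid_le_one s)
  have := mul_nonpos_of_nonneg_of_nonpos hp₀ (h t)
  have := mul_nonpos_of_nonneg_of_nonpos (sub_nonneg.2 hp₁) (h (-t))
  rw [logisticLoss]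
  linarith

theorem hasDerivAt_log_sigmoid (t : ℝ) : HasDerivAt (fun s => log (sigmoid s)) (1 - sigmoid t) t :=
  ((hasDerivAt_sigmoid t).log (sigmoid_pos t).ne').congr_deriv
    (mul_div_cancel_left₀ _ (sigmoid_pos t).ne')

theorem hasDerivAt_logisticLoss (p t : ℝ) : HasDerivAt (logisticLoss p) (sigmoid t - p) t := by
  have hneg : HasDerivAt (fun s => log (sigmoid (-s))) (-sigmoid t) t := by
    have := (hasDerivAt_log_sigmoid (-t)).comp t (hasDerivAt_neg t)
    rw [sigmoid_neg, sub_sub_cancel, mul_neg_one] at this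
    exact this
  exact (((hasDerivAt_log_sigmoid t).const_mul p).add (hneg.const_mul (1 - p))).neg.congr_deriv
    (by ring)

theorem lipschitzWith_sigmoid : LipschitzWith 4⁻¹ sigmoid := by
  refine lipschitzWith_of_nnnorm_deriv_le differentiable_sigmoid fun x => ?_
  rw [← NNReal.coe_le_coe, coe_nnnorm, deriv_sigmoid, Real.norm_eq_abs,
    abs_of_nonneg (mul_nonneg (sigmoid_nonneg x) (sub_nonneg.2 (sigmoid_le_one x)))]
  push_cast
  nlinarith [sq_nonneg (sigmoid x - 2⁻¹)]

theorem logisticLoss_le (p u v : ℝ) :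
    logisticLoss p v ≤ logisticLoss p u + (sigmoid u - p) * (v - u) + 8⁻¹ * (v - u) ^ 2 := by
  have hlip : LipschitzWith 4⁻¹ fun t => sigmoid t - p :=
    LipschitzWith.of_dist_le_mul fun a b => by
      rw [dist_sub_right]; exact lipschitzWith_sigmoid.dist_le_mul a b
  have := le_add_deriv_mul_add_sq_of_lipschitzWith (hasDerivAt_logisticLoss p) hlip u v
  norm_num at this
  linarith

theorem sq_apply_sub_apply_le {ι : Type*} [Fintype ι] (δ : EuclideanSpace ℝ ι) (i j : ι) :
    (δ i - δ j) ^ 2 ≤ 4 * ‖δ‖ ^ 2 := by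
  have hi := PiLp.norm_apply_le δ i
  have hj := PiLp.norm_apply_le δ j
  rw [Real.norm_eq_abs] at hi hj
  have : |δ i - δ j| ≤ 2 * ‖δ‖ := (abs_sub _ _).trans (by linarith)
  nlinarith [abs_nonneg (δ i - δ j), sq_abs (δ i - δ j)]

theorem log_softmax_div_sub_log_softmax_div {Y : Type*} [Fintype Y] [Nonempty Y] (z : Y → ℝ)
    {q : Y → ℝ} (hq : ∀ y, 0 < q y) (y₁ y₂ : Y) :
    log (exp (z y₁) / (∑ y, exp (z y)) / q y₁) - log (exp (z y₂) / (∑ y, exp (z y)) / q y₂)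
      = z y₁ - z y₂ + (log (q y₂) - log (q y₁)) := by
  have hZ : 0 < ∑ y, exp (z y) := sum_pos (fun _ _ => exp_pos _) univ_nonempty
  rw [log_div (by positivity) (hq y₁).ne', log_div (by positivity) (hq y₂).ne',
    log_div (exp_ne_zero _) hZ.ne', log_div (exp_ne_zero _) hZ.ne', log_exp, log_exp]
  ring

theorem sum_mul_mul_eq_one {X Y : Type*} [Fintype X] [Fintype Y] {D : X → ℝ} {q : X → Y → ℝ}
    (hD : ∑ x, D x = 1) (hq : ∀ x, ∑ y, q x y = 1) :
    ∑ i : X × Y × Y, D i.1 * (q i.1 i.2.1 * q i.1 i.2.2) = 1 := by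
  simp [Fintype.sum_prod_type, ← mul_sum, hq, hD]

section DPO

variable {X Y : Type*}

noncomputable def logitDiff (τ : ℝ) (i : X × Y × Y) : EuclideanSpace ℝ (X × Y) →L[ℝ] ℝ :=
  τ⁻¹ • (EuclideanSpace.proj (i.1, i.2.1) - EuclideanSpace.proj (i.1, i.2.2))

theorem logitDiff_apply (τ : ℝ) (i : X × Y × Y) (θ : EuclideanSpace ℝ (X × Y)) :
    logitDiff τ i θ = τ⁻¹ * (θ (i.1, i.2.1) - θ (i.1, i.2.2)) := by
  simp [logitDiff]

variable [Fintype X] [Fintype Y]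

theorem sq_logitDiff_apply_le (τ : ℝ) (i : X × Y × Y) (δ : EuclideanSpace ℝ (X × Y)) :
    logitDiff τ i δ ^ 2 ≤ 4 / τ ^ 2 * ‖δ‖ ^ 2 :=
  calc logitDiff τ i δ ^ 2 = (τ ^ 2)⁻¹ * (δ (i.1, i.2.1) - δ (i.1, i.2.2)) ^ 2 := by
        rw [logitDiff_apply]; ring
    _ ≤ (τ ^ 2)⁻¹ * (4 * ‖δ‖ ^ 2) := by gcongr; exact sq_apply_sub_apply_le δ _ _
    _ = 4 / τ ^ 2 * ‖δ‖ ^ 2 := by ring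

noncomputable def dpoLoss (r : X → Y → ℝ) (τ : ℝ) (D : X → ℝ) (πref π₀ : X → Y → ℝ)
    (θ : EuclideanSpace ℝ (X × Y)) : ℝ :=
  ∑ i : X × Y × Y, D i.1 * (π₀ i.1 i.2.1 * π₀ i.1 i.2.2) *
    logisticLoss (sigmoid (r i.1 i.2.1 - r i.1 i.2.2))
      (logitDiff τ i θ + τ⁻¹ * (log (πref i.1 i.2.2) - log (πref i.1 i.2.1)))

theorem eq_dpoLoss [Nonempty Y] {r : X → Y → ℝ} {τ : ℝ} {D : X → ℝ} {πref π₀ : X → Y → ℝ}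
    (hπref0 : ∀ x y, 0 < πref x y) {σ : ℝ → ℝ} (hσ : ∀ t, σ t = (1 + exp (-t))⁻¹)
    {pstar : X → Y → Y → ℝ} (hpstar : ∀ x y₁ y₂, pstar x y₁ y₂ = σ (r x y₁ - r x y₂))
    {πθ : EuclideanSpace ℝ (X × Y) → X → Y → ℝ}
    (hπθ : ∀ θ x y, πθ θ x y = exp (θ (x, y)) / ∑ y' : Y, exp (θ (x, y')))
    {hbar : EuclideanSpace ℝ (X × Y) → X → Y → Y → ℝ}
    (hhbar : ∀ θ x y₁ y₂, hbar θ x y₁ y₂ =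
      (1 / τ) * (log (πθ θ x y₁ / πref x y₁) - log (πθ θ x y₂ / πref x y₂)))
    {L : EuclideanSpace ℝ (X × Y) → ℝ}
    (hL : ∀ θ, L θ = -∑ x : X, D x * ∑ y₁ : Y, ∑ y₂ : Y,
      π₀ x y₁ * π₀ x y₂ *
        (pstar x y₁ y₂ * log (σ (hbar θ x y₁ y₂)) +
         (1 - pstar x y₁ y₂) * log (σ (-(hbar θ x y₁ y₂))))) :
    L = dpoLoss r τ D πref π₀ := by
  have hσ' : σ = sigmoid := funext hσ
  have hlogit : ∀ θ x y₁ y₂, hbar θ x y₁ y₂ =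
      τ⁻¹ * (θ (x, y₁) - θ (x, y₂)) + τ⁻¹ * (log (πref x y₂) - log (πref x y₁)) := by
    intro θ x y₁ y₂
    rw [hhbar, hπθ, hπθ, log_softmax_div_sub_log_softmax_div (fun y => θ (x, y)) (hπref0 x)]
    ring
  funext θ
  simp only [hL, dpoLoss, logitDiff_apply, hlogit, hpstar, hσ', Fintype.sum_prod_type, mul_sum,
    ← sum_neg_distrib]
  refine sum_congr rfl fun x _ => sum_congr rfl fun y₁ _ => sum_congr rfl fun y₂ _ => ?_
  rw [logisticLoss]
  ring

theorem dpoLoss_nonneg (r : X → Y → ℝ) (τ : ℝ) {D : X → ℝ} (hD0 : ∀ x, 0 ≤ D x)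
    (πref : X → Y → ℝ) {π₀ : X → Y → ℝ} (hπ₀0 : ∀ x y, 0 ≤ π₀ x y) (θ : EuclideanSpace ℝ (X × Y)) :
    0 ≤ dpoLoss r τ D πref π₀ θ :=
  sum_nonneg fun _ _ => mul_nonneg (mul_nonneg (hD0 _) (mul_nonneg (hπ₀0 _ _) (hπ₀0 _ _)))
    (logisticLoss_nonneg (sigmoid_nonneg _) (sigmoid_le_one _) _)

theorem dpoLoss_add_le (r : X → Y → ℝ) (τ : ℝ) {D : X → ℝ} (hD0 : ∀ x, 0 ≤ D x)
    (hD1 : ∑ x, D x = 1) (πref : X → Y → ℝ) {π₀ : X → Y → ℝ} (hπ₀0 : ∀ x y, 0 ≤ π₀ x y)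
    (hπ₀1 : ∀ x, ∑ y, π₀ x y = 1) (θ δ : EuclideanSpace ℝ (X × Y)) :
    dpoLoss r τ D πref π₀ (θ + δ) ≤ dpoLoss r τ D πref π₀ θ
      + ⟪gradient (dpoLoss r τ D πref π₀) θ, δ⟫_ℝ + (2 * τ ^ 2)⁻¹ * ‖δ‖ ^ 2 := by
  have h := apply_add_le_of_eq_sum_comp_affine (F := dpoLoss r τ D πref π₀) (fun _ => rfl)
    (fun i => hasDerivAt_logisticLoss _) (fun i => logisticLoss_le _) (by norm_num)
    (fun i => mul_nonneg (hD0 _) (mul_nonneg (hπ₀0 _ _) (hπ₀0 _ _))) (sq_logitDiff_apply_le τ) θ δ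
  rw [sum_mul_mul_eq_one hD1 hπ₀1] at h
  convert h using 2
  ring

end DPO

/-- Gradient descent on the DPO loss of the softmax-parametrized policy,
with positive step sizes α_t and gradient norms bounded by G, satisfies for T ≥ 2:
min_{1 ≤ i ≤ T−1} ‖∇L_DPO(θ_i)‖² ≤ 2G²·Σα_t²/(τ²·Σα_t) + (L_DPO(θ_1) − L*)/Σα_t. -/
theorem dpo_gradient_descent_convergence
    {X Y : Type*} [Fintype X] [Fintype Y] [Nonempty Y]
    (r : X → Y → ℝ) (τ : ℝ)
    (D : X → ℝ) (hD0 : ∀ x, 0 ≤ D x) (hD1 : ∑ x : X, D x = 1)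
    (πref π₀ : X → Y → ℝ)
    (hπref0 : ∀ x y, 0 < πref x y)
    (hπ₀0 : ∀ x y, 0 < π₀ x y) (hπ₀1 : ∀ x, ∑ y : Y, π₀ x y = 1)
    (σ : ℝ → ℝ) (hσ : ∀ t, σ t = (1 + Real.exp (-t))⁻¹)
    (pstar : X → Y → Y → ℝ)
    (hpstar : ∀ x y₁ y₂, pstar x y₁ y₂ = σ (r x y₁ - r x y₂))
    (πθ : EuclideanSpace ℝ (X × Y) → X → Y → ℝ)
    (hπθ : ∀ θ x y, πθ θ x y = Real.exp (θ (x, y)) / ∑ y' : Y, Real.exp (θ (x, y')))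
    (hbar : EuclideanSpace ℝ (X × Y) → X → Y → Y → ℝ)
    (hhbar : ∀ θ x y₁ y₂, hbar θ x y₁ y₂ =
      (1 / τ) * (Real.log (πθ θ x y₁ / πref x y₁) - Real.log (πθ θ x y₂ / πref x y₂)))
    (L : EuclideanSpace ℝ (X × Y) → ℝ)
    (hL : ∀ θ, L θ = -∑ x : X, D x * ∑ y₁ : Y, ∑ y₂ : Y,
      π₀ x y₁ * π₀ x y₂ *
        (pstar x y₁ y₂ * Real.log (σ (hbar θ x y₁ y₂)) +
         (1 - pstar x y₁ y₂) * Real.log (σ (-(hbar θ x y₁ y₂)))))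
    (Lstar : ℝ) (hLstar : Lstar = sInf (Set.range L))
    (α : ℕ → ℝ) (hα : ∀ t, 1 ≤ t → 0 < α t)
    (G : ℝ)
    (Θ : ℕ → EuclideanSpace ℝ (X × Y))
    (hupdate : ∀ t, 1 ≤ t → Θ (t + 1) = Θ t - α t • gradient L (Θ t))
    (hgradbdd : ∀ t, 1 ≤ t → ‖gradient L (Θ t)‖ ≤ G)
    (T : ℕ) (hT : 2 ≤ T) :
    (Finset.Icc 1 (T - 1)).inf' (Finset.nonempty_Icc.mpr (by omega))
        (fun i => ‖gradient L (Θ i)‖ ^ 2) ≤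
      2 * G ^ 2 * (∑ t ∈ Finset.Icc 1 (T - 1), α t ^ 2) /
          (τ ^ 2 * ∑ t ∈ Finset.Icc 1 (T - 1), α t) +
        (L (Θ 1) - Lstar) / ∑ t ∈ Finset.Icc 1 (T - 1), α t := by
  obtain rfl : L = dpoLoss r τ D πref π₀ := eq_dpoLoss hπref0 hσ hpstar hπθ hhbar hL
  have hπ₀0' : ∀ x y, 0 ≤ π₀ x y := fun x y => (hπ₀0 x y).le
  have hLstar' : ∀ θ, Lstar ≤ dpoLoss r τ D πref π₀ θ := fun θ => hLstar ▸
    csInf_le ⟨0, Set.forall_mem_range.2 (dpoLoss_nonneg r τ hD0 πref hπ₀0')⟩ (Set.mem_range_self θ)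
  set S₁ := ∑ t ∈ Icc 1 (T - 1), α t
  set S₂ := ∑ t ∈ Icc 1 (T - 1), α t ^ 2
  have hS₁ : 0 < S₁ := sum_pos (fun t ht => hα t (mem_Icc.1 ht).1) (nonempty_Icc.2 (by omega))
  have hS₂ : 0 ≤ S₂ := sum_nonneg fun t _ => sq_nonneg (α t)
  have hbound : 0 ≤ 2 * G ^ 2 * S₂ / (τ ^ 2 * S₁) := by positivity
  calc _ ≤ (2 * τ ^ 2)⁻¹ * G ^ 2 * S₂ / S₁ + (dpoLoss r τ D πref π₀ (Θ 1) - Lstar) / S₁ :=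
        inf'_sq_norm_gradient_le_of_gradient_descent (dpoLoss_add_le r τ hD0 hD1 πref hπ₀0' hπ₀1)
          (by positivity) hLstar' hα hupdate hgradbdd _
    _ = 2 * G ^ 2 * S₂ / (τ ^ 2 * S₁) / 4 + (dpoLoss r τ D πref π₀ (Θ 1) - Lstar) / S₁ := by ring
    _ ≤ _ := by linarith
end

section
/- Consider the Forward-BDA loss of the softmax-parametrized policy, L(θ) = Σ_{x∈X} 𝒟(x)·KL(π_θ(·|x) ‖ π^τ(·|x)) = Σ_{x∈X} 𝒟(x) · Σ_{y∈Y} π_θ(y|x)·(log π_θ(y|x) − log π^τ(y|x)), as a function of θ : X × Y → ℝ. Let ε₁ ≥ 0 and suppose θ satisfies |log π_θ(y|x) − log π^τ(y|x)| ≤ ε₁ for all x ∈ X and y ∈ Y. Then the second derivative of L at θ satisfies |D²L(θ)(z,z)| ≤ (6·ε₁ + 10)·Σ_{x,y} z(x,y)² for every direction z : X × Y → ℝ. -/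
/-!
Fix x and write p = π_θ(·|x), ℓ = log p − log π^τ(·|x) and m = Σ_y p_y ℓ_y (the KL divergence).
The gradient of L has coordinates 𝒟(x) p_y (ℓ_y − m), and differentiating once more gives
  D²L(θ)(z,z) = Σ_x 𝒟(x) Σ_y p_y (1 + ℓ_y − m) (z(x,y) − Σ_y' p_y' z(x,y'))².
Since |ℓ| ≤ ε₁ gives |1 + ℓ − m| ≤ 1 + 2ε₁, and a variance is at most the second moment,
|D²L(θ)(z,z)| ≤ (1 + 2ε₁) Σ z², which is stronger than the claimed bound.
-/

open Real

section WeightedSums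

variable {ι : Type*} [Fintype ι] {P : ι → ℝ}

theorem sum_mul_sub_weighted_mean (hP : ∑ i, P i = 1) (a v : ι → ℝ) :
    ∑ i, P i * (a i - ∑ j, P j * a j) * v i
      = ∑ i, P i * (1 + a i) * (v i - ∑ j, P j * v j) := by
  set s := ∑ j, P j * v j
  set m := ∑ j, P j * a j
  have h : ∀ i, P i * (1 + a i) * (v i - s) - P i * (a i - m) * v i
      = P i * v i - s * P i + m * (P i * v i) - s * (P i * a i) := fun i => by ring
  rw [eq_comm, ← sub_eq_zero, ← Finset.sum_sub_distrib]
  simp only [h, Finset.sum_sub_distrib, Finset.sum_add_distrib, ← Finset.mul_sum, hP]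
  ring

theorem sum_mul_centered_mul_eq_sum_mul_sq (hP : ∑ i, P i = 1) (a z : ι → ℝ)
    (ha : ∑ i, P i * a i = 0) :
    ∑ i, P i * ((1 + a i) * (z i - ∑ j, P j * z j) - ∑ j, P j * a j * z j) * z i
      = ∑ i, P i * (1 + a i) * (z i - ∑ j, P j * z j) ^ 2 := by
  set s := ∑ j, P j * z j
  set C := ∑ j, P j * a j * z j
  have h : ∀ i, P i * (1 + a i) * (z i - s) ^ 2
      - P i * ((1 + a i) * (z i - s) - C) * z i
      = C * (P i * z i) - s * (P i * z i) + s ^ 2 * P i - s * (P i * a i * z i)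
        + s ^ 2 * (P i * a i) := fun i => by ring
  rw [eq_comm, ← sub_eq_zero, ← Finset.sum_sub_distrib]
  simp only [h, Finset.sum_sub_distrib, Finset.sum_add_distrib, ← Finset.mul_sum, hP, ha]
  ring

theorem abs_sum_mul_le_of_abs_le (hP0 : ∀ i, 0 ≤ P i) (hP : ∑ i, P i = 1)
    {K : ℝ} {a : ι → ℝ} (ha : ∀ i, |a i| ≤ K) : |∑ i, P i * a i| ≤ K :=
  calc |∑ i, P i * a i| ≤ ∑ i, |P i * a i| := Finset.abs_sum_le_sum_abs _ _
    _ ≤ ∑ i, P i * K := Finset.sum_le_sum fun i _ => by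
        rw [abs_mul, abs_of_nonneg (hP0 i)]
        exact mul_le_mul_of_nonneg_left (ha i) (hP0 i)
    _ = K := by rw [← Finset.sum_mul, hP, one_mul]

theorem sum_mul_sub_weighted_mean_sq_le (hP0 : ∀ i, 0 ≤ P i) (hP : ∑ i, P i = 1) (z : ι → ℝ) :
    ∑ i, P i * (z i - ∑ j, P j * z j) ^ 2 ≤ ∑ i, z i ^ 2 := by
  set s := ∑ j, P j * z j
  have hvar : ∑ i, P i * (z i - s) ^ 2 = ∑ i, P i * z i ^ 2 - s ^ 2 := by
    have h : ∀ i, P i * (z i - s) ^ 2 = P i * z i ^ 2 - 2 * s * (P i * z i) + s ^ 2 * P i :=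
      fun i => by ring
    simp only [h, Finset.sum_add_distrib, Finset.sum_sub_distrib, ← Finset.mul_sum, hP]
    ring
  have hP1 : ∀ i, P i ≤ 1 := fun i =>
    hP ▸ Finset.single_le_sum (fun j _ => hP0 j) (Finset.mem_univ i)
  calc ∑ i, P i * (z i - s) ^ 2 ≤ ∑ i, P i * z i ^ 2 := by
        rw [hvar]; linarith [sq_nonneg s]
    _ ≤ ∑ i, z i ^ 2 := Finset.sum_le_sum fun i _ =>
        mul_le_of_le_one_left (sq_nonneg _) (hP1 i)

theorem abs_sum_mul_sub_weighted_mean_sq_le (hP0 : ∀ i, 0 ≤ P i) (hP : ∑ i, P i = 1)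
    {K : ℝ} {a : ι → ℝ} (ha : ∀ i, |a i| ≤ K) (z : ι → ℝ) :
    |∑ i, P i * a i * (z i - ∑ j, P j * z j) ^ 2| ≤ K * ∑ i, z i ^ 2 := by
  set s := ∑ j, P j * z j
  obtain ⟨i₀, -⟩ := Finset.nonempty_of_sum_ne_zero (hP ▸ one_ne_zero : ∑ i, P i ≠ 0)
  calc |∑ i, P i * a i * (z i - s) ^ 2| ≤ ∑ i, |P i * a i * (z i - s) ^ 2| :=
        Finset.abs_sum_le_sum_abs _ _
    _ ≤ ∑ i, K * (P i * (z i - s) ^ 2) := Finset.sum_le_sum fun i _ => by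
        rw [abs_mul, abs_mul, abs_of_nonneg (hP0 i), abs_of_nonneg (sq_nonneg (z i - s))]
        have := mul_le_mul_of_nonneg_right (ha i) (mul_nonneg (hP0 i) (sq_nonneg (z i - s)))
        linarith
    _ ≤ K * ∑ i, z i ^ 2 := by
        rw [← Finset.mul_sum]
        exact mul_le_mul_of_nonneg_left (sum_mul_sub_weighted_mean_sq_le hP0 hP z)
          ((abs_nonneg _).trans (ha i₀))

end WeightedSums

section Softmax

variable {X Y : Type*} [Fintype Y]

noncomputable def softmax (θ : X × Y → ℝ) (x : X) (y : Y) : ℝ :=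
  exp (θ (x, y)) / ∑ y' : Y, exp (θ (x, y'))

noncomputable def logSoftmaxDeriv (θ : X × Y → ℝ) (x : X) (y : Y) : (X × Y → ℝ) →L[ℝ] ℝ :=
  ContinuousLinearMap.proj (x, y) - ∑ y', softmax θ x y' • ContinuousLinearMap.proj (x, y')

theorem logSoftmaxDeriv_apply (θ : X × Y → ℝ) (x : X) (y : Y) (v : X × Y → ℝ) :
    logSoftmaxDeriv θ x y v = v (x, y) - ∑ y', softmax θ x y' * v (x, y') := by
  simp [logSoftmaxDeriv]

variable [Nonempty Y]

theorem sum_exp_pos (θ : X × Y → ℝ) (x : X) : 0 < ∑ y : Y, exp (θ (x, y)) :=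
  Finset.sum_pos (fun _ _ => exp_pos _) Finset.univ_nonempty

theorem softmax_pos (θ : X × Y → ℝ) (x : X) (y : Y) : 0 < softmax θ x y :=
  div_pos (exp_pos _) (sum_exp_pos θ x)

theorem sum_softmax (θ : X × Y → ℝ) (x : X) : ∑ y, softmax θ x y = 1 := by
  simp only [softmax, ← Finset.sum_div, div_self (sum_exp_pos θ x).ne']

theorem log_softmax (θ : X × Y → ℝ) (x : X) (y : Y) :
    log (softmax θ x y) = θ (x, y) - log (∑ y' : Y, exp (θ (x, y'))) := by
  rw [softmax, log_div (exp_ne_zero _) (sum_exp_pos θ x).ne', log_exp]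

variable [Fintype X]

theorem hasFDerivAt_log_softmax (θ : X × Y → ℝ) (x : X) (y : Y) :
    HasFDerivAt (fun θ => log (softmax θ x y)) (logSoftmaxDeriv θ x y) θ := by
  have hZ : HasFDerivAt (fun θ : X × Y → ℝ => ∑ y' : Y, exp (θ (x, y')))
      (∑ y', exp (θ (x, y')) • ContinuousLinearMap.proj (x, y')) θ :=
    HasFDerivAt.fun_sum fun y' _ => (hasFDerivAt_apply (x, y') θ).exp
  simp only [log_softmax]
  refine ((hasFDerivAt_apply (x, y) θ).sub (hZ.log (sum_exp_pos θ x).ne')).congr_fderiv ?_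
  simp only [logSoftmaxDeriv, Finset.smul_sum, smul_smul, softmax, div_eq_inv_mul]

theorem hasFDerivAt_softmax (θ : X × Y → ℝ) (x : X) (y : Y) :
    HasFDerivAt (fun θ => softmax θ x y) (softmax θ x y • logSoftmaxDeriv θ x y) θ := by
  have h := (hasFDerivAt_log_softmax θ x y).exp
  simp only [exp_log (softmax_pos _ x y)] at h
  exact h

end Softmax

section KL

variable {X Y : Type*} [Fintype Y] [Nonempty Y] (c : X → Y → ℝ)

noncomputable def logRatio (θ : X × Y → ℝ) (x : X) (y : Y) : ℝ :=
  log (softmax θ x y) - c x y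

noncomputable def klSoftmax (θ : X × Y → ℝ) (x : X) : ℝ :=
  ∑ y, softmax θ x y * logRatio c θ x y

noncomputable def klGradCoeff (θ : X × Y → ℝ) (x : X) (y : Y) : ℝ :=
  softmax θ x y * (logRatio c θ x y - klSoftmax c θ x)

noncomputable def klGradCoeffDeriv (θ : X × Y → ℝ) (x : X) (y : Y) : (X × Y → ℝ) →L[ℝ] ℝ :=
  softmax θ x y • ((1 + logRatio c θ x y - klSoftmax c θ x) • logSoftmaxDeriv θ x y
    - ∑ y', klGradCoeff c θ x y' • ContinuousLinearMap.proj (x, y'))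

theorem sum_klGradCoeffDeriv_apply_mul (θ : X × Y → ℝ) (x : X) (z : X × Y → ℝ) :
    ∑ y, klGradCoeffDeriv c θ x y z * z (x, y)
      = ∑ y, softmax θ x y * (1 + (logRatio c θ x y - klSoftmax c θ x))
          * (z (x, y) - ∑ y', softmax θ x y' * z (x, y')) ^ 2 := by
  have hmean : ∑ y, softmax θ x y * (logRatio c θ x y - klSoftmax c θ x) = 0 := by
    simp only [mul_sub, Finset.sum_sub_distrib, ← Finset.sum_mul, sum_softmax, one_mul,
      klSoftmax, sub_self]
  rw [← sum_mul_centered_mul_eq_sum_mul_sq (sum_softmax θ x) _ _ hmean]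
  refine Finset.sum_congr rfl fun y _ => ?_
  simp [klGradCoeffDeriv, logSoftmaxDeriv_apply, klGradCoeff, _root_.sum_apply, add_sub_assoc]

theorem abs_sum_klGradCoeffDeriv_apply_mul_le (θ : X × Y → ℝ) (x : X) {ε : ℝ}
    (hℓ : ∀ y, |logRatio c θ x y| ≤ ε) (z : X × Y → ℝ) :
    |∑ y, klGradCoeffDeriv c θ x y z * z (x, y)| ≤ (1 + 2 * ε) * ∑ y, z (x, y) ^ 2 := by
  have hP0 : ∀ y, 0 ≤ softmax θ x y := fun y => (softmax_pos θ x y).le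
  have hm : |klSoftmax c θ x| ≤ ε := abs_sum_mul_le_of_abs_le hP0 (sum_softmax θ x) hℓ
  have ha : ∀ y, |1 + (logRatio c θ x y - klSoftmax c θ x)| ≤ 1 + 2 * ε := fun y => by
    have := abs_sub (logRatio c θ x y) (klSoftmax c θ x)
    have := abs_add_le 1 (logRatio c θ x y - klSoftmax c θ x)
    rw [abs_one] at this
    linarith [hℓ y]
  rw [sum_klGradCoeffDeriv_apply_mul]
  exact abs_sum_mul_sub_weighted_mean_sq_le hP0 (sum_softmax θ x) ha fun y => z (x, y)

variable [Fintype X]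

theorem hasFDerivAt_logRatio (θ : X × Y → ℝ) (x : X) (y : Y) :
    HasFDerivAt (fun θ => logRatio c θ x y) (logSoftmaxDeriv θ x y) θ :=
  (hasFDerivAt_log_softmax θ x y).sub_const (c x y)

theorem hasFDerivAt_klSoftmax (θ : X × Y → ℝ) (x : X) :
    HasFDerivAt (fun θ => klSoftmax c θ x)
      (∑ y, klGradCoeff c θ x y • ContinuousLinearMap.proj (x, y) : (X × Y → ℝ) →L[ℝ] ℝ) θ := by
  have h : HasFDerivAt (fun θ => klSoftmax c θ x) (∑ y, (softmax θ x y • logSoftmaxDeriv θ x y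
      + logRatio c θ x y • softmax θ x y • logSoftmaxDeriv θ x y)) θ :=
    HasFDerivAt.fun_sum fun y _ =>
      (hasFDerivAt_softmax θ x y).mul (hasFDerivAt_logRatio c θ x y)
  refine h.congr_fderiv (ContinuousLinearMap.ext fun v => ?_)
  simp only [_root_.sum_apply, add_apply, smul_apply, logSoftmaxDeriv_apply,
    ContinuousLinearMap.proj_apply, smul_eq_mul, klGradCoeff, klSoftmax]
  rw [sum_mul_sub_weighted_mean (sum_softmax θ x)]
  exact Finset.sum_congr rfl fun y _ => by ring

theorem hasFDerivAt_klGradCoeff (θ : X × Y → ℝ) (x : X) (y : Y) :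
    HasFDerivAt (fun θ => klGradCoeff c θ x y) (klGradCoeffDeriv c θ x y) θ := by
  refine ((hasFDerivAt_softmax θ x y).mul
    ((hasFDerivAt_logRatio c θ x y).fun_sub (hasFDerivAt_klSoftmax c θ x))).congr_fderiv ?_
  rw [klGradCoeffDeriv]
  module

variable (D : X → ℝ)

noncomputable def klLossGrad (θ : X × Y → ℝ) : (X × Y → ℝ) →L[ℝ] ℝ :=
  ∑ x, D x • ∑ y, klGradCoeff c θ x y • ContinuousLinearMap.proj (x, y)

theorem fderiv_klLoss :
    fderiv ℝ (fun θ => ∑ x, D x * klSoftmax c θ x) = klLossGrad c D :=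
  funext fun θ =>
    (HasFDerivAt.fun_sum fun x _ => (hasFDerivAt_klSoftmax c θ x).const_mul (D x)).fderiv

theorem hasFDerivAt_klLossGrad (θ : X × Y → ℝ) :
    HasFDerivAt (klLossGrad c D)
      (∑ x, D x • ∑ y, (klGradCoeffDeriv c θ x y).smulRight (ContinuousLinearMap.proj (x, y))) θ :=
  HasFDerivAt.fun_sum fun x _ => (HasFDerivAt.fun_sum fun y _ =>
    (hasFDerivAt_klGradCoeff c θ x y).smul_const _).fun_const_smul (D x)

theorem fderiv_fderiv_klLoss_apply (θ z : X × Y → ℝ) :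
    fderiv ℝ (fderiv ℝ (fun θ => ∑ x, D x * klSoftmax c θ x)) θ z z
      = ∑ x, D x * ∑ y, klGradCoeffDeriv c θ x y z * z (x, y) := by
  rw [fderiv_klLoss, (hasFDerivAt_klLossGrad c D θ).fderiv]
  simp [_root_.sum_apply]

theorem abs_fderiv_fderiv_klLoss_le (hD0 : ∀ x, 0 ≤ D x) (hD1 : ∀ x, D x ≤ 1)
    (θ : X × Y → ℝ) {ε : ℝ} (hℓ : ∀ x y, |logRatio c θ x y| ≤ ε) (z : X × Y → ℝ) :
    |fderiv ℝ (fderiv ℝ (fun θ => ∑ x, D x * klSoftmax c θ x)) θ z z|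
      ≤ (1 + 2 * ε) * ∑ p : X × Y, z p ^ 2 := by
  rw [fderiv_fderiv_klLoss_apply, Fintype.sum_prod_type, Finset.mul_sum]
  refine (Finset.abs_sum_le_sum_abs _ _).trans (Finset.sum_le_sum fun x _ => ?_)
  rw [abs_mul, abs_of_nonneg (hD0 x)]
  exact (mul_le_of_le_one_left (abs_nonneg _) (hD1 x)).trans
    (abs_sum_klGradCoeffDeriv_apply_mul_le c θ x (hℓ x) z)

end KL

theorem forward_bda_loss_smooth_general
    {X Y : Type*} [Fintype X] [Fintype Y] [Nonempty Y]
    (D : X → ℝ) (hD0 : ∀ x, 0 ≤ D x) (hD1 : ∑ x : X, D x = 1)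
    (πt : X → Y → ℝ)
    (πθ : (X × Y → ℝ) → X → Y → ℝ)
    (hπθ : ∀ θ x y, πθ θ x y = Real.exp (θ (x, y)) / ∑ y' : Y, Real.exp (θ (x, y')))
    (L : (X × Y → ℝ) → ℝ)
    (hL : ∀ θ, L θ = ∑ x : X, D x * ∑ y : Y,
      πθ θ x y * (Real.log (πθ θ x y) - Real.log (πt x y)))
    (ε₁ : ℝ) (hε₁ : 0 ≤ ε₁)
    (θ : X × Y → ℝ)
    (hθ : ∀ x y, |Real.log (πθ θ x y) - Real.log (πt x y)| ≤ ε₁) :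
    ∀ z : X × Y → ℝ,
      |fderiv ℝ (fderiv ℝ L) θ z z| ≤ (6 * ε₁ + 10) * ∑ p : X × Y, z p ^ 2 := by
  intro z
  obtain rfl : πθ = softmax := funext fun θ => funext fun x => funext (hπθ θ x)
  obtain rfl : L = fun θ => ∑ x, D x * klSoftmax (fun x y => log (πt x y)) θ x := funext hL
  have hD_le_one : ∀ x, D x ≤ 1 := fun x =>
    hD1 ▸ Finset.single_le_sum (fun i _ => hD0 i) (Finset.mem_univ x)
  calc _ ≤ (1 + 2 * ε₁) * ∑ p : X × Y, z p ^ 2 :=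
        abs_fderiv_fderiv_klLoss_le _ D hD0 hD_le_one θ hθ z
    _ ≤ (6 * ε₁ + 10) * ∑ p : X × Y, z p ^ 2 :=
        mul_le_mul_of_nonneg_right (by linarith) (by positivity)

/-- The Forward-BDA loss of the softmax-parametrized policy satisfies,
at every θ with |log π_θ(y|x) − log π^τ(y|x)| ≤ ε₁ for all x, y, the second-derivative
bound |D²L(θ)(z,z)| ≤ (6·ε₁ + 10)·Σ_{x,y} z(x,y)². -/
theorem forward_bda_loss_smooth
    {X Y : Type*} [Fintype X] [Fintype Y] [Nonempty X] [Nonempty Y]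
    (r : X → Y → ℝ) (τ : ℝ) (hτ : 0 < τ)
    (D : X → ℝ) (hD0 : ∀ x, 0 ≤ D x) (hD1 : ∑ x : X, D x = 1)
    (πt : X → Y → ℝ)
    (hπt : ∀ x y, πt x y = Real.exp (τ * r x y) / ∑ y' : Y, Real.exp (τ * r x y'))
    (πθ : (X × Y → ℝ) → X → Y → ℝ)
    (hπθ : ∀ θ x y, πθ θ x y = Real.exp (θ (x, y)) / ∑ y' : Y, Real.exp (θ (x, y')))
    (L : (X × Y → ℝ) → ℝ)
    (hL : ∀ θ, L θ = ∑ x : X, D x * ∑ y : Y,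
      πθ θ x y * (Real.log (πθ θ x y) - Real.log (πt x y)))
    (ε₁ : ℝ) (hε₁ : 0 ≤ ε₁)
    (θ : X × Y → ℝ)
    (hθ : ∀ x y, |Real.log (πθ θ x y) - Real.log (πt x y)| ≤ ε₁) :
    ∀ z : X × Y → ℝ,
      |fderiv ℝ (fderiv ℝ L) θ z z| ≤ (6 * ε₁ + 10) * ∑ p : X × Y, z p ^ 2 :=
  forward_bda_loss_smooth_general D hD0 hD1 πt πθ hπθ L hL ε₁ hε₁ θ hθ
end

section
/- Consider the Reward-Difference-Approximation loss of the softmax-parametrized policy, L(θ) = Σ_{x∈X} 𝒟(x) · Σ_{y₁,y₂∈Y} π_θ(y₁|x)·π_θ(y₂|x) · ((1/τ)·log(π_θ(y₁|x)/π_θ(y₂|x)) − (r(x,y₁) − r(x,y₂)))². Let ε₂ ≥ 0 and suppose θ satisfies |(1/τ)·log(π_θ(y₁|x)/π_θ(y₂|x)) − (r(x,y₁) − r(x,y₂))| ≤ ε₂ for all x ∈ X and y₁, y₂ ∈ Y. Then the second derivative of L at θ satisfies |D²L(θ)(z,z)| ≤ (20·ε₂² + 32·ε₂/τ + 8/τ²)·Σ_{x,y}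 z(x,y)² for every direction z : X × Y → ℝ. -/
/-!
Restrict the loss to a line `θ + t • z`. For each context `x` the summand is
`∑ i j, pᵢ pⱼ gᵢⱼ(t)²`, where `p = softmax (θₓ + t • zₓ)` and `gᵢⱼ` is affine in `t` with slope
`c (zᵢ - zⱼ)`, `c = 1/τ`. The softmax satisfies `pᵢ' = pᵢ wᵢ` with `w = z - 𝔼ₚ z`, and
`(𝔼ₚ z)' = Varₚ z`, so the second derivative at `t = 0` is
`∑ i j, pᵢ pⱼ (((wᵢ + wⱼ)² - 2 Varₚ z) gᵢⱼ² + 4 c gᵢⱼ (wᵢ² - wⱼ²) + 2 c² (wᵢ - wⱼ)²)`.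
Bounding each bracket using `|gᵢⱼ| ≤ ε` and summing against `pᵢ pⱼ` gives
`(6 ε² + 8 c ε + 8 c²) Varₚ z ≤ (6 ε² + 8 c ε + 8 c²) ∑ y, z(x, y)²`.
-/

open Real Finset

lemma fderiv_fderiv_apply_eq_deriv_deriv_line {E : Type*} [NormedAddCommGroup E]
    [NormedSpace ℝ E] {f : E → ℝ} (hf : ContDiff ℝ 2 f) (θ z : E) :
    fderiv ℝ (fderiv ℝ f) θ z z = deriv (deriv fun t : ℝ => f (θ + t • z)) 0 := by
  have hline : ∀ t : ℝ, HasDerivAt (fun s : ℝ => θ + s • z) z t := fun t => by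
    simpa using ((hasDerivAt_id t).smul_const z).const_add θ
  have hderiv : (deriv fun t : ℝ => f (θ + t • z)) = fun t => fderiv ℝ f (θ + t • z) z :=
    funext fun t => ((hf.differentiable two_ne_zero _).hasFDerivAt.comp_hasDerivAt t
      (hline t)).deriv
  have hf' : HasFDerivAt (fderiv ℝ f) (fderiv ℝ (fderiv ℝ f) θ) (θ + (0 : ℝ) • z) := by
    have h1 : ContDiff ℝ 1 (fderiv ℝ f) := hf.fderiv_right (m := 1) (by norm_num)
    simpa using (h1.differentiable one_ne_zero θ).hasFDerivAt
  have h : HasDerivAt (fun t : ℝ => fderiv ℝ f (θ + t • z))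
      (fderiv ℝ (fderiv ℝ f) θ z) 0 := hf'.comp_hasDerivAt 0 (hline 0)
  have h' : HasDerivAt (fun t : ℝ => fderiv ℝ f (θ + t • z) z)
      (fderiv ℝ (fderiv ℝ f) θ z z) 0 := by
    simpa using h.clm_apply (hasDerivAt_const (0 : ℝ) z)
  rw [hderiv, h'.deriv]

lemma deriv_deriv_sum_const_mul {ι : Type*} (s : Finset ι) (a : ι → ℝ) {g : ι → ℝ → ℝ}
    (hg : ∀ i ∈ s, ContDiff ℝ 2 (g i)) (t : ℝ) :
    deriv (deriv fun x => ∑ i ∈ s, a i * g i x) t = ∑ i ∈ s, a i * deriv (deriv (g i)) t := by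
  have h2 : ∀ f : ℝ → ℝ, deriv (deriv f) = iteratedDeriv 2 f := fun f => by
    rw [iteratedDeriv_succ, iteratedDeriv_one]
  simp only [h2]
  rw [iteratedDeriv_fun_sum fun i hi => (contDiff_const.mul (hg i hi)).contDiffAt]
  simp only [iteratedDeriv_const_mul_field]

lemma abs_sum_mul_le_sum {ι : Type*} (s : Finset ι) {a h B : ι → ℝ}
    (ha : ∀ i ∈ s, 0 ≤ a i ∧ a i ≤ 1) (hB : ∀ i ∈ s, |h i| ≤ B i) :
    |∑ i ∈ s, a i * h i| ≤ ∑ i ∈ s, B i := by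
  refine (abs_sum_le_sum_abs _ _).trans (sum_le_sum fun i hi => ?_)
  rw [abs_mul, abs_of_nonneg (ha i hi).1]
  exact (mul_le_mul_of_nonneg_left (hB i hi) (ha i hi).1).trans
    (mul_le_of_le_one_left ((abs_nonneg _).trans (hB i hi)) (ha i hi).2)

lemma HasDerivAt.sum_sum_mul_mul {Y : Type*} [Fintype Y] {q : Y → ℝ → ℝ} {w : Y → ℝ}
    {G : Y → Y → ℝ → ℝ} {G' : Y → Y → ℝ} {t : ℝ} (hq : ∀ i, HasDerivAt (q i) (q i t * w i) t)
    (hG : ∀ i j, HasDerivAt (G i j) (G' i j) t) :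
    HasDerivAt (fun s => ∑ i, ∑ j, q i s * q j s * G i j s)
      (∑ i, ∑ j, q i t * q j t * ((w i + w j) * G i j t + G' i j)) t := by
  refine HasDerivAt.fun_sum fun i _ => HasDerivAt.fun_sum fun j _ => ?_
  exact (((hq i).fun_mul (hq j)).fun_mul (hG i j)).congr_deriv (by ring)

lemma abs_sum_sum_mul_mul_le {Y : Type*} [Fintype Y] {q : Y → ℝ} (hq0 : ∀ y, 0 ≤ q y)
    {f M : Y → Y → ℝ} (h : ∀ i j, |f i j| ≤ M i j) :
    |∑ i, ∑ j, q i * q j * f i j| ≤ ∑ i, ∑ j, q i * q j * M i j := by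
  refine (abs_sum_le_sum_abs _ _).trans <| sum_le_sum fun i _ =>
    (abs_sum_le_sum_abs _ _).trans <| sum_le_sum fun j _ => ?_
  rw [abs_mul, abs_of_nonneg (mul_nonneg (hq0 i) (hq0 j))]
  exact mul_le_mul_of_nonneg_left (h i j) (mul_nonneg (hq0 i) (hq0 j))

namespace RewardDifference

variable {Y : Type*} [Fintype Y]

noncomputable def softmax (u : Y → ℝ) (y : Y) : ℝ := exp (u y) / ∑ y', exp (u y')

def centered (q v : Y → ℝ) (y : Y) : ℝ := v y - ∑ y', q y' * v y'

def rewardGap (c : ℝ) (ρ u : Y → ℝ) (i j : Y) : ℝ := c * (u i - u j) - (ρ i - ρ j)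

noncomputable def pairwiseLoss (c : ℝ) (ρ u : Y → ℝ) : ℝ :=
  ∑ i, ∑ j, softmax u i * softmax u j * rewardGap c ρ u i j ^ 2

section softmax

variable [Nonempty Y]

lemma sum_exp_pos (u : Y → ℝ) : 0 < ∑ y, exp (u y) :=
  sum_pos (fun _ _ => exp_pos _) univ_nonempty

lemma softmax_nonneg (u : Y → ℝ) (y : Y) : 0 ≤ softmax u y :=
  div_nonneg (exp_pos _).le (sum_exp_pos u).le

lemma sum_softmax (u : Y → ℝ) : ∑ y, softmax u y = 1 := by
  simp only [softmax, ← sum_div, div_self (sum_exp_pos u).ne']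

lemma contDiff_softmax {n : WithTop ℕ∞} (y : Y) : ContDiff ℝ n fun u : Y → ℝ => softmax u y :=
  (contDiff_exp.comp (contDiff_apply ℝ ℝ y)).div
    (ContDiff.sum fun y' _ => contDiff_exp.comp (contDiff_apply ℝ ℝ y'))
    fun u => (sum_exp_pos u).ne'

lemma hasDerivAt_softmax_line (u v : Y → ℝ) (y : Y) (t : ℝ) :
    HasDerivAt (fun s => softmax (u + s • v) y)
      (softmax (u + t • v) y * centered (softmax (u + t • v)) v y) t := by
  have hexp : ∀ y', HasDerivAt (fun s => exp (u y' + s * v y'))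
      (exp (u y' + t * v y') * v y') t := fun y' => by
    simpa using (((hasDerivAt_id t).mul_const (v y')).const_add (u y')).exp
  have hS := (sum_exp_pos (u + t • v)).ne'
  simp only [Pi.add_apply, Pi.smul_apply, smul_eq_mul] at hS
  refine ((hexp y).fun_div (HasDerivAt.fun_sum fun y' _ => hexp y') hS).congr_deriv ?_
  simp only [softmax, centered, Pi.add_apply, Pi.smul_apply, smul_eq_mul, div_mul_eq_mul_div,
    ← sum_div]
  field_simp

end softmax

lemma log_softmax_div_softmax (u : Y → ℝ) (i j : Y) :
    log (softmax u i / softmax u j) = u i - u j := by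
  have : Nonempty Y := ⟨i⟩
  rw [softmax, softmax, div_div_div_cancel_right₀ (sum_exp_pos u).ne', ← exp_sub, log_exp]

omit [Fintype Y] in
lemma hasDerivAt_rewardGap_line (c : ℝ) (ρ u v : Y → ℝ) (i j : Y) (t : ℝ) :
    HasDerivAt (fun s => rewardGap c ρ (u + s • v) i j) (c * (v i - v j)) t := by
  have : HasDerivAt (fun s => rewardGap c ρ u i j + s * (c * (v i - v j))) (c * (v i - v j)) t := by
    simpa using ((hasDerivAt_id t).mul_const (c * (v i - v j))).const_add (rewardGap c ρ u i j)
  convert this using 2 with s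
  simp only [rewardGap, Pi.add_apply, Pi.smul_apply, smul_eq_mul]
  ring

section weights

variable {q : Y → ℝ} (hq : ∑ y, q y = 1) (v : Y → ℝ)
include hq

lemma sum_mul_centered : ∑ y, q y * centered q v y = 0 := by
  simp only [centered, mul_sub, sum_sub_distrib, ← sum_mul, hq, one_mul, sub_self]

lemma sum_mul_centered_mul_self :
    ∑ y, q y * centered q v y * v y = ∑ y, q y * centered q v y ^ 2 := by
  calc ∑ y, q y * centered q v y * v y
      = ∑ y, (q y * centered q v y ^ 2 + q y * centered q v y * ∑ y', q y' * v y') :=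
        sum_congr rfl fun y _ => by simp only [centered]; ring
    _ = ∑ y, q y * centered q v y ^ 2 := by
        rw [sum_add_distrib, ← sum_mul, sum_mul_centered hq v, zero_mul, add_zero]

lemma sum_sum_mul_mul_add (f : Y → ℝ) (α β : ℝ) :
    ∑ i, ∑ j, q i * q j * (α * (f i + f j) + β) = 2 * α * ∑ y, q y * f y + β := by
  have h : ∀ i j, q i * q j * (α * (f i + f j) + β) =
      α * (q i * f i) * q j + q i * (α * (q j * f j) + β * q j) := fun i j => by ring
  simp only [h, sum_add_distrib, ← mul_sum, ← sum_mul, hq]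
  ring

lemma sum_mul_centered_sq_le (hq0 : ∀ y, 0 ≤ q y) :
    ∑ y, q y * centered q v y ^ 2 ≤ ∑ y, v y ^ 2 := by
  have hvar : ∑ y, q y * centered q v y ^ 2 =
      ∑ y, q y * v y ^ 2 - (∑ y, q y * v y) ^ 2 := by
    have h : ∀ y, q y * centered q v y * v y = q y * v y ^ 2 - q y * v y * ∑ y', q y' * v y' :=
      fun y => by simp only [centered]; ring
    simp only [← sum_mul_centered_mul_self hq, h, sum_sub_distrib, ← sum_mul]
    ring
  have hq1 : ∀ y, q y ≤ 1 := fun y => hq ▸ single_le_sum (fun y _ => hq0 y) (mem_univ y)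
  calc ∑ y, q y * centered q v y ^ 2 ≤ ∑ y, q y * v y ^ 2 := by
        rw [hvar]; linarith [sq_nonneg (∑ y, q y * v y)]
    _ ≤ ∑ y, v y ^ 2 := sum_le_sum fun y _ =>
        mul_le_of_le_one_left (sq_nonneg _) (hq1 y)

end weights

omit [Fintype Y] in
lemma abs_hessian_term_le {a c ε σ wi wj : ℝ} (ha : |a| ≤ ε) (hσ : 0 ≤ σ) :
    |((wi + wj) ^ 2 - 2 * σ) * a ^ 2 + 4 * c * a * (wi ^ 2 - wj ^ 2) + 2 * c ^ 2 * (wi - wj) ^ 2| ≤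
      (2 * ε ^ 2 + 4 * |c| * ε + 4 * c ^ 2) * (wi ^ 2 + wj ^ 2) + 2 * ε ^ 2 * σ := by
  have ha2 : a ^ 2 ≤ ε ^ 2 := sq_le_sq' (neg_le_of_abs_le ha) (le_of_abs_le ha)
  have h1 : |((wi + wj) ^ 2 - 2 * σ) * a ^ 2| ≤ (2 * (wi ^ 2 + wj ^ 2) + 2 * σ) * ε ^ 2 := by
    rw [abs_mul, abs_of_nonneg (sq_nonneg a)]
    refine mul_le_mul ?_ ha2 (sq_nonneg a) (by positivity)
    rw [abs_le]; constructor <;> nlinarith [sq_nonneg (wi - wj)]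
  have h2 : |4 * c * a * (wi ^ 2 - wj ^ 2)| ≤ 4 * |c| * ε * (wi ^ 2 + wj ^ 2) := by
    have hw : |wi ^ 2 - wj ^ 2| ≤ wi ^ 2 + wj ^ 2 := by
      rw [abs_le]; constructor <;> nlinarith [sq_nonneg wi, sq_nonneg wj]
    rw [abs_mul, abs_mul, abs_mul, abs_of_pos four_pos]
    exact mul_le_mul (by gcongr) hw (abs_nonneg _)
      (mul_nonneg (by positivity) ((abs_nonneg a).trans ha))
  have h3 : |2 * c ^ 2 * (wi - wj) ^ 2| ≤ 4 * c ^ 2 * (wi ^ 2 + wj ^ 2) := by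
    rw [abs_of_nonneg (by positivity)]
    nlinarith [sq_nonneg (wi + wj), sq_nonneg c, mul_nonneg (sq_nonneg c) (sq_nonneg (wi + wj))]
  calc _ ≤ |((wi + wj) ^ 2 - 2 * σ) * a ^ 2| + |4 * c * a * (wi ^ 2 - wj ^ 2)| +
        |2 * c ^ 2 * (wi - wj) ^ 2| := abs_add_three _ _ _
    _ ≤ _ := by linarith

variable [Nonempty Y]

lemma hasDerivAt_centered_softmax_line (u v : Y → ℝ) (y : Y) (t : ℝ) :
    HasDerivAt (fun s => centered (softmax (u + s • v)) v y)
      (-∑ y', softmax (u + t • v) y' * centered (softmax (u + t • v)) v y' * v y') t :=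
  (HasDerivAt.fun_sum fun y' _ => (hasDerivAt_softmax_line u v y' t).mul_const (v y')).const_sub _

lemma hasDerivAt_pairwiseLoss_line (c : ℝ) (ρ u v : Y → ℝ) (t : ℝ) :
    HasDerivAt (fun s => pairwiseLoss c ρ (u + s • v))
      (∑ i, ∑ j, softmax (u + t • v) i * softmax (u + t • v) j *
        ((centered (softmax (u + t • v)) v i + centered (softmax (u + t • v)) v j) *
            rewardGap c ρ (u + t • v) i j ^ 2 +
          2 * rewardGap c ρ (u + t • v) i j * (c * (v i - v j)))) t :=
  HasDerivAt.sum_sum_mul_mul (fun i => hasDerivAt_softmax_line u v i t) fun i j =>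
    ((hasDerivAt_rewardGap_line c ρ u v i j t).pow 2).congr_deriv (by ring)

lemma deriv_deriv_pairwiseLoss_line (c : ℝ) (ρ u v : Y → ℝ) :
    deriv (deriv fun t : ℝ => pairwiseLoss c ρ (u + t • v)) 0 =
      ∑ i, ∑ j, softmax u i * softmax u j *
        (((centered (softmax u) v i + centered (softmax u) v j) ^ 2 -
              2 * ∑ y, softmax u y * centered (softmax u) v y ^ 2) * rewardGap c ρ u i j ^ 2 +
          4 * c * rewardGap c ρ u i j *
            (centered (softmax u) v i ^ 2 - centered (softmax u) v j ^ 2) +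
          2 * c ^ 2 * (centered (softmax u) v i - centered (softmax u) v j) ^ 2) := by
  rw [show (deriv fun t : ℝ => pairwiseLoss c ρ (u + t • v)) = _ from
    funext fun t => (hasDerivAt_pairwiseLoss_line c ρ u v t).deriv]
  have h := HasDerivAt.sum_sum_mul_mul (fun i => hasDerivAt_softmax_line u v i 0) fun i j =>
    (((hasDerivAt_centered_softmax_line u v i 0).fun_add
      (hasDerivAt_centered_softmax_line u v j 0)).fun_mul
      ((hasDerivAt_rewardGap_line c ρ u v i j 0).fun_pow 2)).fun_add
      (((hasDerivAt_rewardGap_line c ρ u v i j 0).const_mul 2).mul_const (c * (v i - v j)))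
  rw [h.deriv]
  simp only [zero_smul, add_zero, sum_mul_centered_mul_self (sum_softmax u)]
  refine sum_congr rfl fun i _ => sum_congr rfl fun j _ => ?_
  have hv : v i - v j = centered (softmax u) v i - centered (softmax u) v j := by
    simp only [centered]; ring
  rw [hv]
  ring

lemma abs_deriv_deriv_pairwiseLoss_line_le {c ε : ℝ} {ρ u : Y → ℝ}
    (hgap : ∀ i j, |rewardGap c ρ u i j| ≤ ε) (v : Y → ℝ) :
    |deriv (deriv fun t : ℝ => pairwiseLoss c ρ (u + t • v)) 0| ≤
      (6 * ε ^ 2 + 8 * |c| * ε + 8 * c ^ 2) * ∑ y, v y ^ 2 := by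
  have hε : 0 ≤ ε := (abs_nonneg _).trans (hgap (Classical.arbitrary Y) (Classical.arbitrary Y))
  have hσ : 0 ≤ ∑ y, softmax u y * centered (softmax u) v y ^ 2 :=
    sum_nonneg fun y _ => mul_nonneg (softmax_nonneg u y) (sq_nonneg _)
  rw [deriv_deriv_pairwiseLoss_line]
  calc _ ≤ _ :=
        abs_sum_sum_mul_mul_le (softmax_nonneg u) fun i j => abs_hessian_term_le (hgap i j) hσ
    _ = (6 * ε ^ 2 + 8 * |c| * ε + 8 * c ^ 2) *
          ∑ y, softmax u y * centered (softmax u) v y ^ 2 := by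
        rw [sum_sum_mul_mul_add (sum_softmax u)]; ring
    _ ≤ _ := mul_le_mul_of_nonneg_left (sum_mul_centered_sq_le (sum_softmax u) v (softmax_nonneg u))
        (add_nonneg (add_nonneg (by positivity) (mul_nonneg (by positivity) hε)) (by positivity))

lemma contDiff_pairwiseLoss {n : WithTop ℕ∞} (c : ℝ) (ρ : Y → ℝ) :
    ContDiff ℝ n (pairwiseLoss c ρ) := by
  unfold pairwiseLoss rewardGap
  have := contDiff_softmax (Y := Y) (n := n)
  fun_prop

noncomputable def rewardDifferenceLoss {X : Type*} [Fintype X] (c : ℝ) (ρ : X → Y → ℝ)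
    (D : X → ℝ) (θ : X × Y → ℝ) : ℝ :=
  ∑ x, D x * pairwiseLoss c (ρ x) fun y => θ (x, y)

lemma abs_fderiv_fderiv_rewardDifferenceLoss_le {X : Type*} [Fintype X] {c ε : ℝ}
    {ρ : X → Y → ℝ} {D : X → ℝ} (hD : ∀ x ∈ univ, 0 ≤ D x ∧ D x ≤ 1) {θ : X × Y → ℝ}
    (hgap : ∀ x i j, |rewardGap c (ρ x) (fun y => θ (x, y)) i j| ≤ ε) (z : X × Y → ℝ) :
    |fderiv ℝ (fderiv ℝ (rewardDifferenceLoss c ρ D)) θ z z| ≤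
      (6 * ε ^ 2 + 8 * |c| * ε + 8 * c ^ 2) * ∑ p, z p ^ 2 := by
  have hsmooth : ContDiff ℝ 2 (rewardDifferenceLoss c ρ D) :=
    ContDiff.sum fun x _ => contDiff_const.mul
      ((contDiff_pairwiseLoss _ _).comp (contDiff_pi.2 fun y => contDiff_apply ℝ ℝ (x, y)))
  have hline : ∀ x ∈ univ, ContDiff ℝ 2 fun t : ℝ =>
      pairwiseLoss c (ρ x) ((fun y => θ (x, y)) + t • fun y => z (x, y)) := fun x _ =>
    (contDiff_pairwiseLoss _ _).comp (contDiff_const.add (contDiff_id.smul contDiff_const))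
  rw [fderiv_fderiv_apply_eq_deriv_deriv_line hsmooth θ z]
  change |deriv (deriv fun t : ℝ => ∑ x, D x *
    pairwiseLoss c (ρ x) ((fun y => θ (x, y)) + t • fun y => z (x, y))) 0| ≤ _
  rw [deriv_deriv_sum_const_mul univ D hline, Fintype.sum_prod_type, mul_sum]
  exact abs_sum_mul_le_sum univ hD fun x _ => abs_deriv_deriv_pairwiseLoss_line_le (hgap x) _

end RewardDifference

open RewardDifference

theorem reward_difference_approximation_loss_smooth_general
    {X Y : Type*} [Fintype X] [Fintype Y] [Nonempty Y]
    (r : X → Y → ℝ) (τ : ℝ) (hτ : 0 < τ)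
    (D : X → ℝ) (hD0 : ∀ x, 0 ≤ D x) (hD1 : ∑ x : X, D x = 1)
    (πθ : (X × Y → ℝ) → X → Y → ℝ)
    (hπθ : ∀ θ x y, πθ θ x y = Real.exp (θ (x, y)) / ∑ y' : Y, Real.exp (θ (x, y')))
    (L : (X × Y → ℝ) → ℝ)
    (hL : ∀ θ, L θ = ∑ x : X, D x * ∑ y₁ : Y, ∑ y₂ : Y,
      πθ θ x y₁ * πθ θ x y₂ *
        ((1 / τ) * Real.log (πθ θ x y₁ / πθ θ x y₂) - (r x y₁ - r x y₂)) ^ 2)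
    (ε₂ : ℝ) (hε₂ : 0 ≤ ε₂)
    (θ : X × Y → ℝ)
    (hθ : ∀ x y₁ y₂,
      |(1 / τ) * Real.log (πθ θ x y₁ / πθ θ x y₂) - (r x y₁ - r x y₂)| ≤ ε₂) :
    ∀ z : X × Y → ℝ,
      |fderiv ℝ (fderiv ℝ L) θ z z| ≤
        (20 * ε₂ ^ 2 + 32 * ε₂ / τ + 8 / τ ^ 2) * ∑ p : X × Y, z p ^ 2 := by
  intro z
  have hπ : ∀ θ x, πθ θ x = softmax fun y => θ (x, y) := fun θ x => funext (hπθ θ x)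
  have hL' : L = rewardDifferenceLoss (1 / τ) r D := by
    funext θ
    simp only [hL, hπ, log_softmax_div_softmax, rewardDifferenceLoss, pairwiseLoss, rewardGap]
  have hgap : ∀ x i j, |rewardGap (1 / τ) (r x) (fun y => θ (x, y)) i j| ≤ ε₂ := fun x i j => by
    simpa only [hπ, log_softmax_div_softmax, rewardGap] using hθ x i j
  have hD : ∀ x ∈ univ, 0 ≤ D x ∧ D x ≤ 1 := fun x _ =>
    ⟨hD0 x, hD1 ▸ single_le_sum (fun x _ => hD0 x) (mem_univ x)⟩
  have hK : 6 * ε₂ ^ 2 + 8 * |1 / τ| * ε₂ + 8 * (1 / τ) ^ 2 ≤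
      20 * ε₂ ^ 2 + 32 * ε₂ / τ + 8 / τ ^ 2 := by
    rw [abs_of_pos (one_div_pos.2 hτ)]
    field_simp
    nlinarith [mul_nonneg hε₂ hτ.le, mul_nonneg (mul_nonneg hε₂ hτ.le) hτ.le]
  rw [hL']
  exact (abs_fderiv_fderiv_rewardDifferenceLoss_le hD hgap z).trans
    (mul_le_mul_of_nonneg_right hK (sum_nonneg fun _ _ => sq_nonneg _))

/-- The Reward-Difference-Approximation loss of the softmax-parametrized
policy satisfies, at every θ whose implicit reward differences are within ε₂ of the
true reward differences, the second-derivative bound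
|D²L(θ)(z,z)| ≤ (20ε₂² + 32ε₂/τ + 8/τ²)·Σ_{x,y} z(x,y)². -/
theorem reward_difference_approximation_loss_smooth
    {X Y : Type*} [Fintype X] [Fintype Y] [Nonempty X] [Nonempty Y]
    (r : X → Y → ℝ) (τ : ℝ) (hτ : 0 < τ)
    (D : X → ℝ) (hD0 : ∀ x, 0 ≤ D x) (hD1 : ∑ x : X, D x = 1)
    (πθ : (X × Y → ℝ) → X → Y → ℝ)
    (hπθ : ∀ θ x y, πθ θ x y = Real.exp (θ (x, y)) / ∑ y' : Y, Real.exp (θ (x, y')))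
    (L : (X × Y → ℝ) → ℝ)
    (hL : ∀ θ, L θ = ∑ x : X, D x * ∑ y₁ : Y, ∑ y₂ : Y,
      πθ θ x y₁ * πθ θ x y₂ *
        ((1 / τ) * Real.log (πθ θ x y₁ / πθ θ x y₂) - (r x y₁ - r x y₂)) ^ 2)
    (ε₂ : ℝ) (hε₂ : 0 ≤ ε₂)
    (θ : X × Y → ℝ)
    (hθ : ∀ x y₁ y₂,
      |(1 / τ) * Real.log (πθ θ x y₁ / πθ θ x y₂) - (r x y₁ - r x y₂)| ≤ ε₂) :
    ∀ z : X × Y → ℝ,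
      |fderiv ℝ (fderiv ℝ L) θ z z| ≤
        (20 * ε₂ ^ 2 + 32 * ε₂ / τ + 8 / τ ^ 2) * ∑ p : X × Y, z p ^ 2 :=
  reward_difference_approximation_loss_smooth_general r τ hτ D hD0 hD1 πθ hπθ L hL ε₂ hε₂ θ hθ
end
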